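/- Let V be an 𝔽₂-vector space and i ≥ j ≥ 1 integers. Then Π_{i,j} + Π′_{i,j} = (i + j) · id as endomorphisms of Λ^i(V) ⊗ Λ^j(V) (where the natural number scalar i + j acts mod 2: the sum is the identity if i + j is odd and zero if i + j is even). -/

import Mathlib

/-! On `x ⊗ y`, `Dθ` moves an entry `x s` to the end of `y` and `θ` then moves an entry of the
new `y` back. Moving `x s` itself back returns `x ⊗ y` up to a permutation of `x`, which is
harmless in characteristic 2; this happens `i` times. Moving some `y t` back gives `x ⊗ y` with
`x s` and `y t` exchanged. `Π′` produces the same exchange terms and `j` copies of `x ⊗ y`, so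
the exchange terms cancel. -/

open scoped TensorProduct

noncomputable section

abbrev F2 := ZMod 2

variable {V : Type*} [AddCommGroup V] [Module F2 V]

/-- The wedge `x₁ ∧ ⋯ ∧ xₙ` of a family of vectors, as an element of the `n`-th exterior
power `⋀[𝔽₂]^n V`. -/
def wedge (n : ℕ) (x : Fin n → V) : ⋀[F2]^n V :=
  ⟨ExteriorAlgebra.ιMulti F2 n x,
    ExteriorAlgebra.ιMulti_range F2 n (Set.mem_range_self x)⟩

/-- `IsTheta i j t θ` says that
`θ : Λ^i(V) ⊗ Λ^j(V) → Λ^a(V) ⊗ Λ^b(V)` (where `a = i + t` and `b = j − t`) is the map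
`θ_{i,j,t}` determined on decomposables by
`x ⊗ (b₁ ∧ ⋯ ∧ b_j) ↦ Σ_{|S| = t} (x ∧ b_S) ⊗ b_{Sᶜ}`,
the sum being over the `t`-element subsets `S` of `{1, …, j}` and `b_S` denoting the wedge
of the `b_s`, `s ∈ S`, in increasing order. -/
def IsTheta (i j t : ℕ) {a b : ℕ} (ha : i + t = a) (hb : j - t = b)
    (θ : (⋀[F2]^i V) ⊗[F2] (⋀[F2]^j V) →ₗ[F2] (⋀[F2]^a V) ⊗[F2] (⋀[F2]^b V)) : Prop :=
  ∀ (x : Fin i → V) (y : Fin j → V),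
    θ (wedge i x ⊗ₜ wedge j y) =
      ∑ S ∈ (Finset.powersetCard t (Finset.univ : Finset (Fin j))).attach,
        wedge a (Fin.append x
            (y ∘ (S.1.orderEmbOfFin (Finset.mem_powersetCard.mp S.2).2)) ∘ Fin.cast ha.symm)
          ⊗ₜ
        wedge b ((y ∘ ((S.1)ᶜ.orderEmbOfFin
            (by simp [Finset.card_compl, (Finset.mem_powersetCard.mp S.2).2]))) ∘
          Fin.cast hb.symm)

/-- `IsDTheta i j t Dθ` says that
`Dθ : Λ^a(V) ⊗ Λ^b(V) → Λ^i(V) ⊗ Λ^j(V)` (where `a = i + t` and `j = b + t`) is the dual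
map `Dθ_{i,j,t}` determined on decomposables by
`(a₁ ∧ ⋯ ∧ a_{i+t}) ⊗ y ↦ Σ_{|S| = t} a_{Sᶜ} ⊗ (y ∧ a_S)`. -/
def IsDTheta (i j t : ℕ) {a b : ℕ} (ha : i + t = a) (hb : b + t = j)
    (Dθ : (⋀[F2]^a V) ⊗[F2] (⋀[F2]^b V) →ₗ[F2] (⋀[F2]^i V) ⊗[F2] (⋀[F2]^j V)) : Prop :=
  ∀ (x : Fin a → V) (y : Fin b → V),
    Dθ (wedge a x ⊗ₜ wedge b y) =
      ∑ S ∈ (Finset.powersetCard t (Finset.univ : Finset (Fin a))).attach,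
        wedge i ((x ∘ ((S.1)ᶜ.orderEmbOfFin
            (by simp [Finset.card_compl, (Finset.mem_powersetCard.mp S.2).2]))) ∘
          Fin.cast (by omega : i = a - t))
          ⊗ₜ
        wedge j (Fin.append y
            (x ∘ (S.1.orderEmbOfFin (Finset.mem_powersetCard.mp S.2).2)) ∘ Fin.cast hb.symm)

open Function

lemma Fin.removeNth_castSucc_snoc {α : Type*} {n : ℕ} (y : Fin (n + 1) → α) (v : α)
    (t : Fin (n + 1)) :
    (Fin.castSucc t).removeNth (Fin.snoc y v : Fin (n + 2) → α) = Fin.snoc (t.removeNth y) v := by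
  ext k
  induction k using Fin.lastCases <;> simp [Fin.removeNth]

lemma Fin.sum_snoc_removeNth_snoc {α M : Type*} [AddCommMonoid M] {m n : ℕ}
    (f : (Fin (m + 1) → α) → (Fin (n + 1) → α) → M) (x : Fin m → α) (y : Fin (n + 1) → α)
    (v : α) :
    ∑ t : Fin (n + 2),
        f (Fin.snoc x ((Fin.snoc y v : Fin (n + 2) → α) t))
          (t.removeNth (Fin.snoc y v : Fin (n + 2) → α)) =
      ∑ t, f (Fin.snoc x (y t)) (Fin.snoc (t.removeNth y) v) + f (Fin.snoc x v) y := by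
  simp [Fin.sum_univ_castSucc, Fin.removeNth_castSucc_snoc]

lemma Finset.sum_attach_powersetCard_one {n : ℕ} {M : Type*} [AddCommMonoid M]
    (f : {S // S ∈ Finset.powersetCard 1 (Finset.univ : Finset (Fin n))} → M) :
    ∑ S ∈ (Finset.powersetCard 1 (Finset.univ : Finset (Fin n))).attach, f S =
      ∑ p : Fin n, f ⟨{p}, by simp⟩ := by
  refine (Finset.sum_bij (fun p _ => ⟨{p}, by simp⟩) (fun _ _ => Finset.mem_attach _ _)
    (fun _ _ _ _ h => Finset.singleton_injective (congrArg Subtype.val h)) (fun S _ => ?_)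
    (fun _ _ => rfl)).symm
  obtain ⟨p, hp⟩ := Finset.card_eq_one.mp (Finset.mem_powersetCard.mp S.2).2
  exact ⟨p, Finset.mem_univ p, Subtype.ext hp.symm⟩

lemma wedge_eq_ιMulti (n : ℕ) (x : Fin n → V) : wedge n x = exteriorPower.ιMulti F2 n x := rfl

lemma wedge_comp_perm {n : ℕ} (x : Fin n → V) (σ : Equiv.Perm (Fin n)) :
    wedge n (x ∘ σ) = wedge n x := by
  rw [wedge_eq_ιMulti, AlternatingMap.map_perm]
  rcases Int.units_eq_one_or (Equiv.Perm.sign σ) with h | h <;>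
    simp [h, ZModModule.neg_eq_self, wedge_eq_ιMulti]

lemma wedge_snoc_removeNth_self {n : ℕ} (x : Fin (n + 1) → V) (p : Fin (n + 1)) :
    wedge (n + 1) (Fin.snoc (p.removeNth x) (x p)) = wedge (n + 1) x := by
  have hσ : Bijective (Fin.snoc p.succAbove p : Fin (n + 1) → Fin (n + 1)) :=
    Finite.injective_iff_bijective.mp
      (Fin.snoc_injective_of_injective Fin.succAbove_right_injective (by simp))
  have h := wedge_comp_perm x (Equiv.ofBijective _ hσ)
  rwa [Equiv.coe_ofBijective, Fin.comp_snoc] at h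

lemma ext_wedge_tmul {i j : ℕ} {M : Type*} [AddCommGroup M] [Module F2 M]
    {f g : (⋀[F2]^i V) ⊗[F2] (⋀[F2]^j V) →ₗ[F2] M}
    (h : ∀ x y, f (wedge i x ⊗ₜ wedge j y) = g (wedge i x ⊗ₜ wedge j y)) : f = g :=
  TensorProduct.ext <| LinearMap.ext_on_range (exteriorPower.ιMulti_span F2 i V) fun x =>
    LinearMap.ext_on_range (exteriorPower.ιMulti_span F2 j V) fun y => h x y

lemma IsTheta.apply_one {i n : ℕ}
    {θ : (⋀[F2]^i V) ⊗[F2] (⋀[F2]^(n + 1) V) →ₗ[F2] (⋀[F2]^(i + 1) V) ⊗[F2] (⋀[F2]^n V)}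
    (hθ : IsTheta i (n + 1) 1 rfl rfl θ) (x : Fin i → V) (y : Fin (n + 1) → V) :
    θ (wedge i x ⊗ₜ wedge (n + 1) y) =
      ∑ t, wedge (i + 1) (Fin.snoc x (y t)) ⊗ₜ wedge n (t.removeNth y) := by
  rw [hθ, Finset.sum_attach_powersetCard_one]
  simp only [Finset.orderEmbOfFin_compl_singleton, Fin.append_right_eq_snoc, comp_apply,
    Finset.orderEmbOfFin_singleton]
  rfl

lemma IsDTheta.apply_one {i n : ℕ}
    {Dθ : (⋀[F2]^(i + 1) V) ⊗[F2] (⋀[F2]^n V) →ₗ[F2] (⋀[F2]^i V) ⊗[F2] (⋀[F2]^(n + 1) V)}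
    (hDθ : IsDTheta i (n + 1) 1 rfl rfl Dθ) (x : Fin (i + 1) → V) (y : Fin n → V) :
    Dθ (wedge (i + 1) x ⊗ₜ wedge n y) =
      ∑ s, wedge i (s.removeNth x) ⊗ₜ wedge (n + 1) (Fin.snoc y (x s)) := by
  rw [hDθ, Finset.sum_attach_powersetCard_one]
  simp only [Finset.orderEmbOfFin_compl_singleton, Fin.append_right_eq_snoc, comp_apply,
    Finset.orderEmbOfFin_singleton]
  rfl

def exchangeSum {m n : ℕ} (x : Fin (m + 1) → V) (y : Fin (n + 1) → V) :
    (⋀[F2]^(m + 1) V) ⊗[F2] (⋀[F2]^(n + 1) V) :=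
  ∑ s, ∑ t, wedge (m + 1) (Fin.snoc (s.removeNth x) (y t)) ⊗ₜ
    wedge (n + 1) (Fin.snoc (t.removeNth y) (x s))

section

variable {m n : ℕ}

lemma theta_dTheta_tmul
    {θ : (⋀[F2]^m V) ⊗[F2] (⋀[F2]^(n + 2) V) →ₗ[F2] (⋀[F2]^(m + 1) V) ⊗[F2] (⋀[F2]^(n + 1) V)}
    (hθ : IsTheta m (n + 2) 1 rfl rfl θ)
    {Dθ : (⋀[F2]^(m + 1) V) ⊗[F2] (⋀[F2]^(n + 1) V) →ₗ[F2] (⋀[F2]^m V) ⊗[F2] (⋀[F2]^(n + 2) V)}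
    (hDθ : IsDTheta m (n + 2) 1 rfl rfl Dθ) (x : Fin (m + 1) → V) (y : Fin (n + 1) → V) :
    θ (Dθ (wedge (m + 1) x ⊗ₜ wedge (n + 1) y)) =
      exchangeSum x y + (m + 1) • (wedge (m + 1) x ⊗ₜ wedge (n + 1) y) := by
  rw [hDθ.apply_one, map_sum]
  simp only [hθ.apply_one, Fin.sum_snoc_removeNth_snoc (fun a b => wedge _ a ⊗ₜ wedge _ b),
    wedge_snoc_removeNth_self, Finset.sum_add_distrib, Finset.sum_const, Finset.card_univ,
    Fintype.card_fin, exchangeSum]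

lemma dTheta_theta_tmul
    {θ : (⋀[F2]^(m + 1) V) ⊗[F2] (⋀[F2]^(n + 1) V) →ₗ[F2] (⋀[F2]^(m + 2) V) ⊗[F2] (⋀[F2]^n V)}
    (hθ : IsTheta (m + 1) (n + 1) 1 rfl rfl θ)
    {Dθ : (⋀[F2]^(m + 2) V) ⊗[F2] (⋀[F2]^n V) →ₗ[F2] (⋀[F2]^(m + 1) V) ⊗[F2] (⋀[F2]^(n + 1) V)}
    (hDθ : IsDTheta (m + 1) (n + 1) 1 rfl rfl Dθ) (x : Fin (m + 1) → V) (y : Fin (n + 1) → V) :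
    Dθ (θ (wedge (m + 1) x ⊗ₜ wedge (n + 1) y)) =
      exchangeSum x y + (n + 1) • (wedge (m + 1) x ⊗ₜ wedge (n + 1) y) := by
  rw [hθ.apply_one, map_sum]
  simp only [hDθ.apply_one, Fin.sum_snoc_removeNth_snoc (fun b a => wedge _ a ⊗ₜ wedge _ b),
    wedge_snoc_removeNth_self, Finset.sum_add_distrib, Finset.sum_const, Finset.card_univ,
    Fintype.card_fin, exchangeSum]
  rw [Finset.sum_comm]

theorem pi_add_pi'_succ
    {θ₁ : (⋀[F2]^m V) ⊗[F2] (⋀[F2]^(n + 2) V) →ₗ[F2] (⋀[F2]^(m + 1) V) ⊗[F2] (⋀[F2]^(n + 1) V)}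
    (hθ₁ : IsTheta m (n + 2) 1 rfl rfl θ₁)
    {Dθ₁ : (⋀[F2]^(m + 1) V) ⊗[F2] (⋀[F2]^(n + 1) V) →ₗ[F2] (⋀[F2]^m V) ⊗[F2] (⋀[F2]^(n + 2) V)}
    (hDθ₁ : IsDTheta m (n + 2) 1 rfl rfl Dθ₁)
    {θ₂ : (⋀[F2]^(m + 1) V) ⊗[F2] (⋀[F2]^(n + 1) V) →ₗ[F2] (⋀[F2]^(m + 2) V) ⊗[F2] (⋀[F2]^n V)}
    (hθ₂ : IsTheta (m + 1) (n + 1) 1 rfl rfl θ₂)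
    {Dθ₂ : (⋀[F2]^(m + 2) V) ⊗[F2] (⋀[F2]^n V) →ₗ[F2] (⋀[F2]^(m + 1) V) ⊗[F2] (⋀[F2]^(n + 1) V)}
    (hDθ₂ : IsDTheta (m + 1) (n + 1) 1 rfl rfl Dθ₂) :
    θ₁ ∘ₗ Dθ₁ + Dθ₂ ∘ₗ θ₂ = ((m + 1 + (n + 1) : ℕ) : F2) • LinearMap.id := by
  refine ext_wedge_tmul fun x y => ?_
  rw [LinearMap.add_apply, LinearMap.comp_apply, LinearMap.comp_apply, theta_dTheta_tmul hθ₁ hDθ₁,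
    dTheta_theta_tmul hθ₂ hDθ₂, add_add_add_comm, ZModModule.add_self, zero_add, ← add_nsmul,
    LinearMap.smul_apply, LinearMap.id_apply, Nat.cast_smul_eq_nsmul]

end

/-- For `i ≥ j ≥ 1`,
`Π_{i,j} + Π′_{i,j} = (i + j) · id` as endomorphisms of `Λ^i(V) ⊗ Λ^j(V)`, where
`Π_{i,j} = θ_{i−1,j+1,1} ∘ Dθ_{i−1,j+1,1}`, `Π′_{i,j} = Dθ_{i,j,1} ∘ θ_{i,j,1}`, and the
natural number `i + j` acts mod 2. -/
theorem pi_add_pi' {V : Type*} [AddCommGroup V] [Module F2 V]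
    (i j : ℕ) (hj : 1 ≤ j) (hij : j ≤ i)
    (θ₁ : (⋀[F2]^(i - 1) V) ⊗[F2] (⋀[F2]^(j + 1) V) →ₗ[F2] (⋀[F2]^i V) ⊗[F2] (⋀[F2]^j V))
    (hθ₁ : IsTheta (i - 1) (j + 1) 1 (by omega) (by omega) θ₁)
    (Dθ₁ : (⋀[F2]^i V) ⊗[F2] (⋀[F2]^j V) →ₗ[F2] (⋀[F2]^(i - 1) V) ⊗[F2] (⋀[F2]^(j + 1) V))
    (hDθ₁ : IsDTheta (i - 1) (j + 1) 1 (by omega) (by omega) Dθ₁)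
    (θ₂ : (⋀[F2]^i V) ⊗[F2] (⋀[F2]^j V) →ₗ[F2] (⋀[F2]^(i + 1) V) ⊗[F2] (⋀[F2]^(j - 1) V))
    (hθ₂ : IsTheta i j 1 rfl rfl θ₂)
    (Dθ₂ : (⋀[F2]^(i + 1) V) ⊗[F2] (⋀[F2]^(j - 1) V) →ₗ[F2] (⋀[F2]^i V) ⊗[F2] (⋀[F2]^j V))
    (hDθ₂ : IsDTheta i j 1 rfl (by omega) Dθ₂) :
    θ₁ ∘ₗ Dθ₁ + Dθ₂ ∘ₗ θ₂ = ((i + j : ℕ) : F2) • LinearMap.id := by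
  obtain ⟨m, rfl⟩ : ∃ m, i = m + 1 := ⟨i - 1, by omega⟩
  obtain ⟨n, rfl⟩ : ∃ n, j = n + 1 := ⟨j - 1, by omega⟩
  exact pi_add_pi'_succ hθ₁ hDθ₁ hθ₂ hDθ₂

end
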